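/- arXiv:math/9411240 — 5 statements merged into one kernel-verified Lean document; each statement's English description precedes it below -/
import Mathlib

section
/- On the board of width m = r+s−1 and infinite length (vertices (x,y) with 0 ≤ x < r+s−1, y ∈ ℤ), there is no {r,s}-leaper path from (0,0) to (0,1). -/
/-!
The columns `0, …, r+s-2` together with the missing column `r+s-1` form one cycle of
`x ↦ x + r` modulo `r+s` (as `r` is a unit mod `r+s`). Cutting it at the missing column leaves a
path, along which every leaper move advances or retreats by exactly one position: a move
`x ↦ x + r` advances, a move `x ↦ x + s ≡ x - r` retreats. So the number of moves has the parity
of the change of position, while each move changes `x + y` by `±r ± s ≡ r + s` modulo 2. Hence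
`x + y + (r+s)·(position of x)` is invariant modulo 2, and it differs at `(0,0)` and `(0,1)`.
-/

/-- A single `{r,s}`-leaper move on the board with ranks `0 ≤ x < r+s-1`
and unrestricted (integer) files. -/
def stripStep (r s : ℕ) (p q : ℕ × ℤ) : Prop :=
  p.1 < r + s - 1 ∧ q.1 < r + s - 1 ∧
    ((Nat.dist p.1 q.1 = r ∧ (p.2 - q.2).natAbs = s) ∨
     (Nat.dist p.1 q.1 = s ∧ (p.2 - q.2).natAbs = r))

theorem ZMod.val_add_one_of_add_one_ne_zero {n : ℕ} [NeZero n] {b : ZMod n} (h : b + 1 ≠ 0) :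
    (b + 1).val = b.val + 1 := by
  have hcast : ((b.val + 1 : ℕ) : ZMod n) = b + 1 := by push_cast; rw [ZMod.natCast_zmod_val]
  have hlt : b.val + 1 < n :=
    lt_of_le_of_ne b.val_lt fun heq => h (by rw [← hcast, heq, ZMod.natCast_self])
  rw [← hcast, ZMod.val_cast_of_lt hlt]

theorem ZMod.natCast_ne_zero_of_pos_of_lt {n k : ℕ} (hk : 0 < k) (hkn : k < n) :
    (k : ZMod n) ≠ 0 := by
  rw [Ne, ZMod.natCast_eq_zero_iff]
  exact fun hdvd => (Nat.le_of_dvd hk hdvd).not_gt hkn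

theorem ZMod.intCast_sub_eq_of_natAbs_sub_eq {y y' : ℤ} {k : ℕ} (h : (y - y').natAbs = k) :
    (y : ZMod 2) - y' = k := by
  rw [← Int.cast_sub, ← ZMod.natAbs_mod_two, h]

/-- For `r` a unit of `ZMod m`, the `k < m` with `k * r = a`. -/
def orbitIndex (r : ℕ) {m : ℕ} (a : ZMod m) : ℕ :=
  (a * (r : ZMod m)⁻¹).val

theorem orbitIndex_add {r m : ℕ} [NeZero m] (hr : r.Coprime m) {a : ZMod m}
    (ha : a + (r : ZMod m) ≠ 0) :
    orbitIndex r (a + (r : ZMod m)) = orbitIndex r a + 1 := by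
  have hinv : (r : ZMod m) * (r : ZMod m)⁻¹ = 1 := ZMod.coe_mul_inv_eq_one r hr
  have hmul : (a + r) * (r : ZMod m)⁻¹ = a * (r : ZMod m)⁻¹ + 1 := by rw [add_mul, hinv]
  have hne : a * (r : ZMod m)⁻¹ + 1 ≠ 0 := by
    have hfactor : a + r = (a * (r : ZMod m)⁻¹ + 1) * r := by
      rw [add_mul, one_mul, mul_assoc, mul_comm _ (r : ZMod m), hinv, mul_one]
    exact fun h0 => ha (by rw [hfactor, h0, zero_mul])
  rw [orbitIndex, orbitIndex, hmul, ZMod.val_add_one_of_add_one_ne_zero hne]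

/-- Column `x` sits at position `orbitIndex r (x + 1)` on the path of columns. -/
def leaperParity (r s : ℕ) (p : ℕ × ℤ) : ZMod 2 :=
  p.1 + p.2 + (r + s) * orbitIndex r ((p.1 + 1 : ℕ) : ZMod (r + s))

section

variable {r s : ℕ}

theorem stripStep.symm {p q : ℕ × ℤ} (h : stripStep r s p q) : stripStep r s q p := by
  obtain ⟨hp, hq, hmove⟩ := h
  refine ⟨hq, hp, ?_⟩
  rwa [Nat.dist_comm, ← neg_sub, Int.natAbs_neg]

theorem leaperParity_add_left (hco : r.Coprime (r + s)) {x : ℕ} {y y' : ℤ}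
    (hx : x + r + 1 < r + s) (hy : (y - y').natAbs = s) :
    leaperParity r s (x, y) = leaperParity r s (x + r, y') := by
  have : NeZero (r + s) := ⟨by omega⟩
  have hidx : orbitIndex r ((x + r + 1 : ℕ) : ZMod (r + s))
      = orbitIndex r ((x + 1 : ℕ) : ZMod (r + s)) + 1 := by
    have hne : ((x + 1 : ℕ) : ZMod (r + s)) + r ≠ 0 := by
      exact_mod_cast ZMod.natCast_ne_zero_of_pos_of_lt (by omega) (by omega)
    rw [← orbitIndex_add hco hne]
    push_cast
    ring_nf
  simp only [leaperParity, hidx]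
  push_cast
  linear_combination (norm := ring_nf) ZMod.intCast_sub_eq_of_natAbs_sub_eq hy
  reduce_mod_char

theorem leaperParity_add_right (hco : r.Coprime (r + s)) {x : ℕ} {y y' : ℤ}
    (hx : x + s + 1 < r + s) (hy : (y - y').natAbs = r) :
    leaperParity r s (x, y) = leaperParity r s (x + s, y') := by
  have : NeZero (r + s) := ⟨by omega⟩
  have hwrap : ((x + s + 1 : ℕ) : ZMod (r + s)) + r = ((x + 1 : ℕ) : ZMod (r + s)) := by
    have hm : ((r + s : ℕ) : ZMod (r + s)) = 0 := ZMod.natCast_self _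
    push_cast at hm ⊢
    linear_combination hm
  have hidx : orbitIndex r ((x + 1 : ℕ) : ZMod (r + s))
      = orbitIndex r ((x + s + 1 : ℕ) : ZMod (r + s)) + 1 := by
    have hne : ((x + s + 1 : ℕ) : ZMod (r + s)) + r ≠ 0 := by
      rw [hwrap]
      exact ZMod.natCast_ne_zero_of_pos_of_lt (by omega) (by omega)
    rw [← hwrap, orbitIndex_add hco hne]
  simp only [leaperParity, hidx]
  push_cast
  linear_combination (norm := ring_nf) ZMod.intCast_sub_eq_of_natAbs_sub_eq hy
  reduce_mod_char

theorem leaperParity_eq_of_stripStep_of_le (hco : r.Coprime (r + s)) {p q : ℕ × ℤ}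
    (h : stripStep r s p q) (hle : p.1 ≤ q.1) : leaperParity r s p = leaperParity r s q := by
  obtain ⟨x, y⟩ := p
  obtain ⟨x', y'⟩ := q
  obtain ⟨-, hx', ⟨hd, hy⟩ | ⟨hd, hy⟩⟩ := h <;>
    rw [Nat.dist_eq_sub_of_le hle] at hd
  · obtain rfl : x' = x + r := by omega
    exact leaperParity_add_left hco (by omega) hy
  · obtain rfl : x' = x + s := by omega
    exact leaperParity_add_right hco (by omega) hy

theorem leaperParity_eq_of_stripStep (hgcd : Nat.gcd r s = 1) {p q : ℕ × ℤ}
    (h : stripStep r s p q) : leaperParity r s p = leaperParity r s q := by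
  have hco : r.Coprime (r + s) := Nat.coprime_self_add_right.mpr hgcd
  rcases le_total p.1 q.1 with hle | hle
  · exact leaperParity_eq_of_stripStep_of_le hco h hle
  · exact (leaperParity_eq_of_stripStep_of_le hco h.symm hle).symm

end

theorem strip_not_reachable_general
    (r s : ℕ) (hgcd : Nat.gcd r s = 1) :
    ¬ Relation.ReflTransGen (stripStep r s) (0, (0 : ℤ)) (0, (1 : ℤ)) := by
  intro h
  have hinv : leaperParity r s (0, 0) = leaperParity r s (0, 1) := by
    have := h.lift (leaperParity r s) fun _ _ => leaperParity_eq_of_stripStep hgcd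
    rwa [Relation.reflTransGen_eq_self] at this
  simp [leaperParity] at hinv

/-- On the board of width `r+s-1` and infinite length there is no
`{r,s}`-leaper path from `(0,0)` to `(0,1)`. -/
theorem strip_not_reachable
    (r s : ℕ) (hr : 1 ≤ r) (hrs : r < s) (hgcd : Nat.gcd r s = 1) :
    ¬ Relation.ReflTransGen (stripStep r s) (0, (0 : ℤ)) (0, (1 : ℤ)) :=
  strip_not_reachable_general r s hgcd
end

section
/- If the {r,s}-leaper graph on the (r+s)×(2s) board is connected, then so is the leaper graph on any m×n board with m ≥ r+s and n ≥ 2s. -/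
/-- The `{r,s}`-leaper graph on an `m × n` board: vertices are the cells
`(x,y)` with `0 ≤ x < m`, `0 ≤ y < n`, and two cells are adjacent when
their absolute coordinate differences are `{r, s}`. -/
def leaperGraph (r s m n : ℕ) : SimpleGraph (Fin m × Fin n) :=
  SimpleGraph.fromRel fun p q =>
    (Nat.dist p.1.val q.1.val = r ∧ Nat.dist p.2.val q.2.val = s) ∨
    (Nat.dist p.1.val q.1.val = s ∧ Nat.dist p.2.val q.2.val = r)

/-!
Adding a row to a connected board keeps it connected as soon as every cell `(m, y)` of the new
row is one move away from the old board: the move `(m - s, y ± r)` works when the board has at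
least `s` rows and at least `2r` columns, since then one of `y - r`, `y + r` is a column.
Growing the `(r+s) × 2s` board first to `m × 2s` and then, transposed, to `m × n` proves the
theorem, and `r ≤ s` is exactly what makes both directions wide enough.
-/

namespace SimpleGraph

theorem Connected.of_hom_of_forall_reachable {V W : Type*} {G : SimpleGraph V}
    {H : SimpleGraph W} (hG : G.Connected) (f : G →g H) (hf : ∀ w, ∃ v, H.Reachable (f v) w) :
    H.Connected := by
  obtain ⟨v₀⟩ := hG.nonempty
  refine H.connected_iff_exists_forall_reachable.mpr ⟨f v₀, fun w => ?_⟩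
  obtain ⟨v, hv⟩ := hf w
  exact ((hG v₀ v).map f).trans hv

end SimpleGraph

theorem Nat.exists_lt_dist_eq {r n y : ℕ} (hy : y < n) (hn : 2 * r ≤ n) :
    ∃ y' < n, Nat.dist y' y = r := by
  by_cases hry : r ≤ y
  · exact ⟨y - r, by omega, by unfold Nat.dist; omega⟩
  · exact ⟨y + r, by omega, by unfold Nat.dist; omega⟩

namespace leaperGraph

variable {r s m n : ℕ}

theorem adj_iff {p q : Fin m × Fin n} :
    (leaperGraph r s m n).Adj p q ↔ p ≠ q ∧
      ((Nat.dist p.1 q.1 = r ∧ Nat.dist p.2 q.2 = s) ∨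
        (Nat.dist p.1 q.1 = s ∧ Nat.dist p.2 q.2 = r)) := by
  simp only [leaperGraph, SimpleGraph.fromRel_adj, Nat.dist_comm (q.1 : ℕ),
    Nat.dist_comm (q.2 : ℕ)]
  tauto

variable (r s m n) in
def transposeIso : leaperGraph r s m n ≃g leaperGraph r s n m where
  toEquiv := Equiv.prodComm _ _
  map_rel_iff' := by
    intro p q
    simp only [adj_iff, Equiv.prodComm_apply, Prod.fst_swap, Prod.snd_swap, ne_eq,
      Prod.swap_injective.eq_iff]
    tauto

variable (r s m n) in
def castSuccHom : leaperGraph r s m n →g leaperGraph r s (m + 1) n where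
  toFun p := (p.1.castSucc, p.2)
  map_rel' := by
    intro p q hpq
    rw [adj_iff] at hpq ⊢
    refine ⟨fun he => hpq.1 ?_, hpq.2⟩
    simp only [Prod.mk.injEq, Fin.castSucc_inj] at he
    exact Prod.ext he.1 he.2

@[simp]
theorem castSuccHom_apply (p : Fin m × Fin n) : castSuccHom r s m n p = (p.1.castSucc, p.2) :=
  rfl

theorem connected_succ_left (hs : 0 < s) (hm : s ≤ m) (hn : 2 * r ≤ n)
    (h : (leaperGraph r s m n).Connected) : (leaperGraph r s (m + 1) n).Connected := by
  refine h.of_hom_of_forall_reachable (castSuccHom r s m n) fun ⟨x, y⟩ => ?_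
  induction x using Fin.lastCases with
  | cast i => exact ⟨(i, y), .rfl⟩
  | last =>
    obtain ⟨y', hy', hdist⟩ := Nat.exists_lt_dist_eq y.isLt hn
    refine ⟨(⟨m - s, by omega⟩, ⟨y', hy'⟩), SimpleGraph.Adj.reachable ?_⟩
    have hdist_left : Nat.dist (m - s) m = s := by unfold Nat.dist; omega
    rw [adj_iff]
    refine ⟨fun he => ?_, Or.inr ⟨hdist_left, hdist⟩⟩
    have := congrArg (fun c => (c.1 : ℕ)) he
    simp only [castSuccHom_apply, Fin.val_castSucc, Fin.val_last] at this
    omega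

theorem connected_succ_right (hs : 0 < s) (hm : 2 * r ≤ m) (hn : s ≤ n)
    (h : (leaperGraph r s m n).Connected) : (leaperGraph r s m (n + 1)).Connected :=
  (transposeIso r s _ _).connected_iff.mp <|
    connected_succ_left hs hn hm <| (transposeIso r s m n).connected_iff.mp h

theorem connected_of_le_left (hs : 0 < s) (hm : s ≤ m) (hn : 2 * r ≤ n)
    (h : (leaperGraph r s m n).Connected) {m' : ℕ} (hm' : m ≤ m') :
    (leaperGraph r s m' n).Connected := by
  induction m', hm' using Nat.le_induction with
  | base => exact h
  | succ k hk ih => exact connected_succ_left hs (hm.trans hk) hn ih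

theorem connected_of_le_right (hs : 0 < s) (hm : 2 * r ≤ m) (hn : s ≤ n)
    (h : (leaperGraph r s m n).Connected) {n' : ℕ} (hn' : n ≤ n') :
    (leaperGraph r s m n').Connected := by
  induction n', hn' using Nat.le_induction with
  | base => exact h
  | succ k hk ih => exact connected_succ_right hs hm (hn.trans hk) ih

end leaperGraph

theorem leaperGraph_connected_mono_general
    (r s : ℕ) (hrs : r ≤ s)
    (h : (leaperGraph r s (r + s) (2 * s)).Connected) :
    ∀ m n : ℕ, r + s ≤ m → 2 * s ≤ n → (leaperGraph r s m n).Connected := by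
  intro m n hm hn
  obtain ⟨⟨_, y⟩⟩ := h.nonempty
  have hs : 0 < s := by have := y.pos; omega
  have h_wide : (leaperGraph r s m (2 * s)).Connected :=
    leaperGraph.connected_of_le_left hs (by omega) (by omega) h hm
  exact leaperGraph.connected_of_le_right hs (by omega) (by omega) h_wide hn

/-- If the `{r,s}`-leaper graph on the `(r+s) × 2s` board is connected, then
so is the leaper graph on any `m × n` board with `m ≥ r+s` and `n ≥ 2s`. -/
theorem leaperGraph_connected_mono
    (r s : ℕ) (hr : 1 ≤ r) (hrs : r ≤ s)
    (h : (leaperGraph r s (r + s) (2 * s)).Connected) :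
    ∀ m n : ℕ, r + s ≤ m → 2 * s ≤ n → (leaperGraph r s m n).Connected :=
  leaperGraph_connected_mono_general r s hrs h
end

section
/- Let r > 2 and s = r+1. If the {r,r+1}-leaper graph on an m×n board has a Hamiltonian circuit and 2r+1 < m ≤ n, then m ≥ 4r+2. -/
/-- A graph has a Hamiltonian circuit. -/
def HasHamCycle {V : Type*} [DecidableEq V] (G : SimpleGraph V) : Prop :=
  ∃ (v : V) (w : G.Walk v v), w.IsHamiltonianCycle

set_option linter.unusedSectionVars false


section Machinery
variable {V : Type*} [DecidableEq V] {G : SimpleGraph V}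

lemma walk_support_eq {u v : V} (p : G.Walk u v) :
    p.support = (List.range (p.length + 1)).map p.getVert := by
  induction p with
  | nil => rfl
  | @cons a b c h q ih =>
    have hcomp : (SimpleGraph.Walk.cons h q).getVert ∘ Nat.succ = q.getVert :=
      funext fun i => rfl
    rw [SimpleGraph.Walk.support_cons, ih, SimpleGraph.Walk.length_cons]
    conv_rhs => rw [List.range_succ_eq_map]
    rw [List.map_cons, List.map_map, hcomp]
    rfl

/-- `u` is a cycle-neighbour of `v` in the cyclic enumeration `E`. -/
def CycU (E : ℕ → V) (N : ℕ) (v u : V) : Prop :=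
  ∃ k, k < N ∧ ((E k = v ∧ E (k+1) = u) ∨ (E k = u ∧ E (k+1) = v))

structure CycOk (G : SimpleGraph V) (E : ℕ → V) (N : ℕ) : Prop where
  h3 : 3 ≤ N
  adj : ∀ k, G.Adj (E k) (E (k+1))
  inj : ∀ k l, k < N → l < N → E k = E l → k = l
  surj : ∀ v, ∃ k, k < N ∧ E k = v
  shift : ∀ x c, E (x % N + c) = E (x + c)

namespace CycOk
variable {E : ℕ → V} {N : ℕ}

lemma hmod (h : CycOk G E N) (x : ℕ) : E (x % N) = E x := by
  have := h.shift x 0; simpa using this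

lemma hper (h : CycOk G E N) (x : ℕ) : E (x + N) = E x := by
  rw [← h.hmod (x + N), Nat.add_mod_right, h.hmod]

lemma cycU_symm (h : CycU E N v u) : CycU E N u v := by
  obtain ⟨k, hk, hc⟩ := h; exact ⟨k, hk, hc.symm⟩

lemma cycU_adj (h : CycOk G E N) (hu : CycU E N v u) : G.Adj v u := by
  obtain ⟨k, hk, hc⟩ := hu
  rcases hc with ⟨h1, h2⟩ | ⟨h1, h2⟩
  · rw [← h1, ← h2]; exact h.adj k
  · rw [← h1, ← h2]; exact (h.adj k).symm

lemma two_nbrs (h : CycOk G E N) (v : V) :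
    ∃ p q : V, p ≠ q ∧ CycU E N v p ∧ CycU E N v q ∧
      (∀ u, CycU E N v u → u = p ∨ u = q) := by
  have h3 := h.h3
  have hN0 : 0 < N := by omega
  obtain ⟨k, hk, hkv⟩ := h.surj v
  refine ⟨E (k+1), E (k + (N-1)), ?_, ?_, ?_, ?_⟩
  · -- distinct
    intro hEq
    have h1 : E ((k+1) % N) = E ((k + (N-1)) % N) := by rw [h.hmod, h.hmod]; exact hEq
    have h2 := h.inj _ _ (Nat.mod_lt _ hN0) (Nat.mod_lt _ hN0) h1
    rcases Nat.lt_or_ge (k+1) N with h' | h'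
    · rw [Nat.mod_eq_of_lt h'] at h2
      rcases Nat.eq_zero_or_pos k with rfl | hkpos
      · rw [Nat.zero_add, Nat.mod_eq_of_lt (by omega)] at h2; omega
      · have e : k + (N-1) = (k-1) + N := by omega
        rw [e, Nat.add_mod_right, Nat.mod_eq_of_lt (by omega)] at h2; omega
    · have hkN : k + 1 = N := by omega
      have e : k + (N-1) = (N-2) + N := by omega
      rw [hkN, Nat.mod_self, e, Nat.add_mod_right, Nat.mod_eq_of_lt (by omega)] at h2
      omega
  · exact ⟨k, hk, Or.inl ⟨hkv, rfl⟩⟩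
  · refine ⟨(k + (N-1)) % N, Nat.mod_lt _ hN0, Or.inr ⟨h.hmod _, ?_⟩⟩
    rw [h.shift]
    have e : k + (N-1) + 1 = k + N := by omega
    rw [e, h.hper]; exact hkv
  · rintro u ⟨k₀, hk₀, (⟨h1, h2⟩ | ⟨h1, h2⟩)⟩
    · left
      have : k₀ = k := h.inj _ _ hk₀ hk (by rw [h1, hkv])
      rw [← h2, this]
    · right
      have hkk : (k₀+1) % N = k := by
        refine h.inj _ _ (Nat.mod_lt _ hN0) hk ?_
        rw [h.hmod, h2, hkv]
      have : u = E (k₀ + N) := by rw [h.hper, h1]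
      rw [this]
      have e : k₀ + N = (k₀+1) + (N-1) := by omega
      rw [e, ← h.shift, hkk]

lemma forced2 (h : CycOk G E N) {v a b : V}
    (hN : ∀ u, G.Adj v u → u = a ∨ u = b) (hab : a ≠ b) :
    CycU E N v a ∧ CycU E N v b := by
  obtain ⟨p, q, hpq, hUp, hUq, _⟩ := h.two_nbrs v
  have hp := hN p (h.cycU_adj hUp)
  have hq := hN q (h.cycU_adj hUq)
  rcases hp with rfl | rfl <;> rcases hq with rfl | rfl
  · exact absurd rfl hpq
  · exact ⟨hUp, hUq⟩
  · exact ⟨hUq, hUp⟩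
  · exact absurd rfl hpq

lemma not_third (h : CycOk G E N) {v a b c : V}
    (hUa : CycU E N v a) (hUb : CycU E N v b) (hab : a ≠ b)
    (hca : c ≠ a) (hcb : c ≠ b) : ¬ CycU E N v c := by
  obtain ⟨p, q, hpq, _, _, huniq⟩ := h.two_nbrs v
  intro hUc
  rcases huniq a hUa with rfl | rfl <;> rcases huniq b hUb with rfl | rfl <;>
    rcases huniq c hUc with rfl | rfl <;> simp_all

lemma forced3 (h : CycOk G E N) {v a b c : V}
    (hN : ∀ u, G.Adj v u → u = a ∨ u = b ∨ u = c)
    (hnc : ¬ CycU E N v c) (hab : a ≠ b) :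
    CycU E N v a ∧ CycU E N v b := by
  obtain ⟨p, q, hpq, hUp, hUq, _⟩ := h.two_nbrs v
  have hp := hN p (h.cycU_adj hUp)
  have hq := hN q (h.cycU_adj hUq)
  rcases hp with rfl | rfl | rfl <;> rcases hq with rfl | rfl | rfl <;>
    first
    | exact absurd rfl hpq
    | exact absurd hUp hnc
    | exact absurd hUq hnc
    | exact ⟨hUp, hUq⟩
    | exact ⟨hUq, hUp⟩

end CycOk
end Machinery

section M2
variable {V : Type*} [DecidableEq V] {G : SimpleGraph V} {E : ℕ → V} {N : ℕ}

lemma CycOk.no_half_ind (h : CycOk G E N) (A : Finset V)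
    (hind : ∀ a ∈ A, ∀ b ∈ A, ¬ G.Adj a b) (hcard : N ≤ 2 * A.card)
    (χ : V → ℕ) (hflip : ∀ k, (χ (E k) + χ (E (k+1))) % 2 = 1)
    (a b : V) (ha : a ∈ A) (hb : b ∈ A) (hab : (χ a + χ b) % 2 = 1) : False := by
  classical
  have h3 := h.h3
  have hN0 : 0 < N := by omega
  set P : Finset ℕ := (Finset.range N).filter (fun k => E k ∈ A) with hP
  have hPmem : ∀ k, k ∈ P ↔ k < N ∧ E k ∈ A := by
    intro k; simp [hP, Finset.mem_filter, Finset.mem_range]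
  -- card P = card A
  have hPcard : P.card = A.card := by
    refine Finset.card_bij (fun k _ => E k) ?_ ?_ ?_
    · intro k hk; exact ((hPmem k).1 hk).2
    · intro k hk l hl hkl
      exact h.inj _ _ ((hPmem k).1 hk).1 ((hPmem l).1 hl).1 hkl
    · intro v hv
      obtain ⟨k, hk, rfl⟩ := h.surj v
      exact ⟨k, (hPmem k).2 ⟨hk, hv⟩, rfl⟩
  -- successor map
  set σ : ℕ → ℕ := fun k => (k+1) % N with hσ
  have hσlt : ∀ k, σ k < N := fun k => Nat.mod_lt _ hN0
  have hσinj : ∀ k l, k < N → l < N → σ k = σ l → k = l := by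
    intro k l hk hl hkl
    simp only [hσ] at hkl
    rcases Nat.lt_or_ge (k+1) N with h1 | h1 <;> rcases Nat.lt_or_ge (l+1) N with h2 | h2
    · rw [Nat.mod_eq_of_lt h1, Nat.mod_eq_of_lt h2] at hkl; omega
    · have : l + 1 = N := by omega
      rw [Nat.mod_eq_of_lt h1, this, Nat.mod_self] at hkl; omega
    · have : k + 1 = N := by omega
      rw [this, Nat.mod_self, Nat.mod_eq_of_lt h2] at hkl; omega
    · omega
  -- independence of positions
  have hindP : ∀ k ∈ P, σ k ∉ P := by
    intro k hk hk1
    obtain ⟨hkN, hkA⟩ := (hPmem k).1 hk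
    obtain ⟨_, hk1A⟩ := (hPmem _).1 hk1
    have : E (σ k) = E (k+1) := by
      simpa [hσ] using h.hmod (k+1)
    rw [this] at hk1A
    exact hind _ hkA _ hk1A (h.adj k)
  have himg : P.image σ ⊆ Finset.range N \ P := by
    intro q hq
    obtain ⟨k, hk, rfl⟩ := Finset.mem_image.1 hq
    exact Finset.mem_sdiff.2 ⟨Finset.mem_range.2 (hσlt k), hindP k hk⟩
  have himgcard : (P.image σ).card = P.card := by
    refine Finset.card_image_of_injOn ?_
    intro k hk l hl
    exact hσinj k l ((hPmem k).1 hk).1 ((hPmem l).1 hl).1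
  have hPrange : P ⊆ Finset.range N := Finset.filter_subset _ _
  have hsd : (Finset.range N \ P).card = N - P.card := by
    rw [Finset.card_sdiff_of_subset hPrange, Finset.card_range]
  have hle : P.card ≤ N - P.card := by
    calc P.card = (P.image σ).card := himgcard.symm
      _ ≤ (Finset.range N \ P).card := Finset.card_le_card himg
      _ = N - P.card := hsd
  have hPN : 2 * P.card = N := by
    have := hPcard
    omega
  -- image equals complement
  have himgeq : P.image σ = Finset.range N \ P := by
    have hle2 : (Finset.range N \ P).card ≤ (P.image σ).card := by
      rw [himgcard, hsd]; omega
    exact Finset.eq_of_subset_of_card_le himg hle2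
  -- complement maps into P
  have hback : ∀ q, q < N → q ∉ P → σ q ∈ P := by
    intro q hq hqP
    by_contra hσq
    have : σ q ∈ Finset.range N \ P :=
      Finset.mem_sdiff.2 ⟨Finset.mem_range.2 (hσlt q), hσq⟩
    rw [← himgeq] at this
    obtain ⟨p, hp, hpq⟩ := Finset.mem_image.1 this
    have : p = q := hσinj p q ((hPmem p).1 hp).1 hq hpq
    exact hqP (this ▸ hp)
  have hstep2 : ∀ k ∈ P, (k+2) % N ∈ P := by
    intro k hk
    have h1 : σ k ∉ P := hindP k hk
    have h2 : σ (σ k) ∈ P := hback _ (hσlt k) h1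
    have : σ (σ k) = (k+2) % N := by
      simp only [hσ]
      rw [Nat.mod_add_mod]
    rwa [this] at h2
  have horbit : ∀ j, ∀ k ∈ P, (k + 2*j) % N ∈ P := by
    intro j
    induction j with
    | zero => intro k hk
              rw [Nat.mul_zero, Nat.add_zero, Nat.mod_eq_of_lt ((hPmem k).1 hk).1]
              exact hk
    | succ i ih =>
        intro k hk
        have h1 := hstep2 _ (ih k hk)
        rw [Nat.mod_add_mod] at h1
        have : k + 2*i + 2 = k + 2*(i+1) := by ring
        rwa [this] at h1
  -- positions of a and b
  obtain ⟨ka, hka, hkaE⟩ := h.surj a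
  obtain ⟨kb, hkb, hkbE⟩ := h.surj b
  have hkaP : ka ∈ P := (hPmem ka).2 ⟨hka, hkaE ▸ ha⟩
  have hkbP : kb ∈ P := (hPmem kb).2 ⟨hkb, hkbE ▸ hb⟩
  -- parity of positions
  have hχ : ∀ k, (χ (E k) + k) % 2 = (χ (E 0)) % 2 := by
    intro k
    induction k with
    | zero => rfl
    | succ i ih =>
        have := hflip i
        omega
  have hpar : (ka + kb) % 2 = 1 := by
    have h1 := hχ ka
    have h2 := hχ kb
    rw [hkaE] at h1; rw [hkbE] at h2
    omega
  -- build the contradiction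
  obtain ⟨j, hj⟩ : ∃ j, ka + 2*j = kb + 2*N - 1 := by
    refine ⟨(kb + 2*N - 1 - ka)/2, by omega⟩
  have hq0 : (ka + 2*j) % N ∈ P := horbit j ka hkaP
  have hq0' : σ ((ka + 2*j) % N) = kb := by
    simp only [hσ]
    rw [Nat.mod_add_mod, hj]
    have : kb + 2*N - 1 + 1 = kb + N + N := by omega
    rw [this, Nat.add_mod_right, Nat.add_mod_right, Nat.mod_eq_of_lt hkb]
  have := hindP _ hq0
  rw [hq0'] at this
  exact this hkbP

end M2
section LeaperHelpers

variable {r m n : ℕ}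

lemma pair_ext {u v : Fin m × Fin n} (h1 : u.1.val = v.1.val)
    (h2 : u.2.val = v.2.val) : u = v := by
  obtain ⟨⟨x, hx⟩, ⟨y, hy⟩⟩ := u
  obtain ⟨⟨a, ha⟩, ⟨b, hb⟩⟩ := v
  simp only at h1 h2
  subst h1; subst h2; rfl

lemma pair_ne_fst {u v : Fin m × Fin n} (h : u.1.val ≠ v.1.val) : u ≠ v :=
  fun e => h (by rw [e])

lemma pair_ne_snd {u v : Fin m × Fin n} (h : u.2.val ≠ v.2.val) : u ≠ v :=
  fun e => h (by rw [e])

lemma adj_coords {u v : Fin m × Fin n} (h : (leaperGraph r (r+1) m n).Adj u v) :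
    (Nat.dist u.1.val v.1.val = r ∧ Nat.dist u.2.val v.2.val = r+1) ∨
    (Nat.dist u.1.val v.1.val = r+1 ∧ Nat.dist u.2.val v.2.val = r) := by
  rw [leaperGraph, SimpleGraph.fromRel_adj] at h
  rcases h.2 with (h' | h') | (h' | h')
  · exact Or.inl h'
  · exact Or.inr h'
  · exact Or.inl ⟨by rw [Nat.dist_comm]; exact h'.1, by rw [Nat.dist_comm]; exact h'.2⟩
  · exact Or.inr ⟨by rw [Nat.dist_comm]; exact h'.1, by rw [Nat.dist_comm]; exact h'.2⟩

end LeaperHelpers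
/-- If `r > 2` and the `{r,r+1}`-leaper graph on an `m × n` board has a
Hamiltonian circuit with `2r+1 < m ≤ n`, then `m ≥ 4r+2`. -/
theorem leaper_hamCycle_width_bound
    (r m n : ℕ) (hr : 2 < r) (hm : 2 * r + 1 < m) (hmn : m ≤ n)
    (h : HasHamCycle (leaperGraph r (r + 1) m n)) :
    4 * r + 2 ≤ m := by
  by_contra hcon
  push_neg at hcon
  obtain ⟨v0, w, hw⟩ := h
  set N : ℕ := w.length with hN
  have hNcard : N = m * n := by
    rw [hN, hw.length_eq, Fintype.card_prod, Fintype.card_fin, Fintype.card_fin]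
  have hn3 : 3 ≤ n := by omega
  have h3 : 3 ≤ N := by
    rw [hNcard]
    calc 3 = 3 * 1 := rfl
    _ ≤ m * n := Nat.mul_le_mul (by omega) (by omega)
  have hN0 : 0 < N := by omega
  -- getVert machinery
  have hvN : w.getVert N = v0 := w.getVert_length
  have hsupp := walk_support_eq w
  have htail : w.support.tail = (List.range N).map (fun i => w.getVert (i+1)) := by
    rw [hsupp, List.range_succ_eq_map, List.map_cons, List.tail_cons, List.map_map]
    rfl
  have hnd : w.support.tail.Nodup := hw.isCycle.support_nodup
  rw [htail] at hnd
  have hget : ∀ i j, i < N → j < N → w.getVert (i+1) = w.getVert (j+1) → i = j := by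
    intro i j hi hj hij
    have hi' : i < (List.map (fun i => w.getVert (i+1)) (List.range N)).length := by
      simpa using hi
    have hj' : j < (List.map (fun i => w.getVert (i+1)) (List.range N)).length := by
      simpa using hj
    have e1 : (List.map (fun i => w.getVert (i+1)) (List.range N))[i] = w.getVert (i+1) := by
      simp
    have e2 : (List.map (fun i => w.getVert (i+1)) (List.range N))[j] = w.getVert (j+1) := by
      simp
    exact (hnd.getElem_inj_iff).1 (by rw [e1, e2]; exact hij)
  have hVinj : ∀ k l, k < N → l < N → w.getVert k = w.getVert l → k = l := by
    intro k l hk hl hkl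
    match k, l with
    | 0, 0 => rfl
    | 0, (j+1) =>
      exfalso
      have : w.getVert ((N-1)+1) = w.getVert (j+1) := by
        rw [show (N-1)+1 = N by omega, hvN, ← hkl, w.getVert_zero]
      have := hget (N-1) j (by omega) (by omega) this
      omega
    | (i+1), 0 =>
      exfalso
      have : w.getVert (i+1) = w.getVert ((N-1)+1) := by
        rw [show (N-1)+1 = N by omega, hvN, hkl, w.getVert_zero]
      have := hget i (N-1) (by omega) (by omega) this
      omega
    | (i+1), (j+1) =>
      have := hget i j (by omega) (by omega) hkl
      omega
  set E : ℕ → Fin m × Fin n := fun k => w.getVert (k % N) with hE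
  have hEadj : ∀ k, (leaperGraph r (r+1) m n).Adj (E k) (E (k+1)) := by
    intro k
    have h1 : k % N < N := Nat.mod_lt _ hN0
    have e0 : (k+1) % N = (k % N + 1) % N := (Nat.mod_add_mod k N 1).symm
    rcases Nat.lt_or_ge (k % N + 1) N with h' | h'
    · have e1 : (k+1) % N = k % N + 1 := by rw [e0]; exact Nat.mod_eq_of_lt h'
      have := w.adj_getVert_succ (i := k % N) (by omega)
      simpa [hE, e1] using this
    · have hkN : k % N + 1 = N := by omega
      have e1 : (k+1) % N = 0 := by rw [e0, hkN, Nat.mod_self]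
      have := w.adj_getVert_succ (i := k % N) (by omega)
      rw [hkN, hvN] at this
      simp only [hE, e1]
      rw [w.getVert_zero]
      exact this
  have hEok : CycOk (leaperGraph r (r+1) m n) E N := by
    refine ⟨h3, hEadj, ?_, ?_, ?_⟩
    · intro k l hk hl hkl
      simp only [hE, Nat.mod_eq_of_lt hk, Nat.mod_eq_of_lt hl] at hkl
      exact hVinj k l hk hl hkl
    · intro v
      have hv := hw.mem_support v
      rw [hsupp] at hv
      obtain ⟨k, hk, hkv⟩ := List.mem_map.1 hv
      rw [List.mem_range] at hk
      rcases Nat.lt_or_ge k N with h' | h'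
      · exact ⟨k, h', by simp only [hE, Nat.mod_eq_of_lt h']; exact hkv⟩
      · have : k = N := by omega
        refine ⟨0, by omega, ?_⟩
        simp only [hE, Nat.zero_mod, w.getVert_zero]
        rw [← hvN, ← this]
        exact hkv
    · intro x c
      simp only [hE]
      rw [Nat.mod_add_mod]
  have hχflip : ∀ k, ((E k).1.val + (E k).2.val + ((E (k+1)).1.val + (E (k+1)).2.val)) % 2 = 1 := by
    intro k
    rcases adj_coords (hEadj k) with ⟨d1, d2⟩ | ⟨d1, d2⟩ <;>
    · have e1 : (E k).1.val - (E (k+1)).1.val + ((E (k+1)).1.val - (E k).1.val) = _ := d1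
      have e2 : (E k).2.val - (E (k+1)).2.val + ((E (k+1)).2.val - (E k).2.val) = _ := d2
      omega
  rcases (show m ≤ 4*r ∨ m = 4*r+1 by omega) with hm4 | hm4
  · -- middle widths: independent half set of columns
    set K : ℕ := max (2*r+1) (m - r) with hK
    have hK1 : 2*r+1 ≤ K := le_max_left _ _
    have hK2 : m - r ≤ K := le_max_right _ _
    have hKor : K = 2*r+1 ∨ K = m - r := max_choice _ _
    set Sn : Finset ℕ := Finset.range r ∪ Finset.Ico K m with hSn
    have hSnm : ∀ x ∈ Sn, x < m := by
      intro x hx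
      rcases Finset.mem_union.1 hx with hx | hx
      · have := Finset.mem_range.1 hx; omega
      · exact (Finset.mem_Ico.1 hx).2
    have hSnmem : ∀ x, x ∈ Sn ↔ (x < r ∨ (K ≤ x ∧ x < m)) := by
      intro x
      simp [hSn, Finset.mem_union, Finset.mem_range, Finset.mem_Ico]
    have hSncard : Sn.card = r + (m - K) := by
      rw [hSn, Finset.card_union_of_disjoint, Finset.card_range, Nat.card_Ico]
      rw [Finset.disjoint_left]
      intro x hx hx'
      have := Finset.mem_range.1 hx
      have := (Finset.mem_Ico.1 hx').1
      omega
    set A : Finset (Fin m × Fin n) := (Sn.attachFin hSnm) ×ˢ (Finset.univ : Finset (Fin n)) with hA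
    have hAmem : ∀ v : Fin m × Fin n, v ∈ A ↔ v.1.val ∈ Sn := by
      intro v
      simp [hA, Finset.mem_product, Finset.mem_attachFin]
    have hind : ∀ a ∈ A, ∀ b ∈ A, ¬ (leaperGraph r (r+1) m n).Adj a b := by
      intro a ha b hb hadj
      have ha' := (hSnmem _).1 ((hAmem a).1 ha)
      have hb' := (hSnmem _).1 ((hAmem b).1 hb)
      rcases adj_coords hadj with ⟨d1, _⟩ | ⟨d1, _⟩ <;>
      · have e1 : a.1.val - b.1.val + (b.1.val - a.1.val) = _ := d1
        omega
    have hAcard : A.card = Sn.card * n := by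
      rw [hA, Finset.card_product, Finset.card_attachFin, Finset.card_univ, Fintype.card_fin]
    have hcard : N ≤ 2 * A.card := by
      rw [hNcard, hAcard]
      have h2S : m ≤ 2 * Sn.card := by rw [hSncard]; omega
      calc m * n ≤ (2 * Sn.card) * n := Nat.mul_le_mul_right n h2S
      _ = 2 * (Sn.card * n) := by ring
    have h0r : (0 : ℕ) ∈ Sn := (hSnmem 0).2 (Or.inl (by omega))
    refine hEok.no_half_ind A hind hcard (fun v => v.1.val + v.2.val) hχflip
      ((⟨0, by omega⟩ : Fin m), (⟨0, by omega⟩ : Fin n))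
      ((⟨0, by omega⟩ : Fin m), (⟨1, by omega⟩ : Fin n))
      ((hAmem _).2 h0r) ((hAmem _).2 h0r) (by simp)
  · -- m = 4r+1 : local forced-edge contradiction
    -- cells
    have hrm : r - 2 < m := by omega
    set cA1 : Fin m × Fin n := (⟨r-2, by omega⟩, ⟨1, by omega⟩) with hcA1
    set cA2 : Fin m × Fin n := (⟨r-1, by omega⟩, ⟨0, by omega⟩) with hcA2
    set cW  : Fin m × Fin n := (⟨2*r-1, by omega⟩, ⟨r+1, by omega⟩) with hcW
    set cC1 : Fin m × Fin n := (⟨r-1, by omega⟩, ⟨2, by omega⟩) with hcC1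
    set cC2 : Fin m × Fin n := (⟨3*r+1, by omega⟩, ⟨2, by omega⟩) with hcC2
    set cD  : Fin m × Fin n := (⟨3*r, by omega⟩, ⟨1, by omega⟩) with hcD
    set cP  : Fin m × Fin n := (⟨2*r, by omega⟩, ⟨r+2, by omega⟩) with hcP
    set cQ  : Fin m × Fin n := (⟨4*r, by omega⟩, ⟨r+2, by omega⟩) with hcQ
    set cX1 : Fin m × Fin n := (⟨2*r-2, by omega⟩, ⟨r+2, by omega⟩) with hcX1
    set cX2 : Fin m × Fin n := (⟨2*r, by omega⟩, ⟨r, by omega⟩) with hcX2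
    set cY1 : Fin m × Fin n := (⟨2*r-1, by omega⟩, ⟨r+3, by omega⟩) with hcY1
    set cY2 : Fin m × Fin n := (⟨2*r+1, by omega⟩, ⟨r+3, by omega⟩) with hcY2
    -- neighbourhood computations
    have hA1 : ∀ u, (leaperGraph r (r+1) m n).Adj cA1 u → u = cX1 ∨ u = cW := by
      intro u hadj
      have hu1 := u.1.isLt
      have hu2 := u.2.isLt
      rcases adj_coords hadj with ⟨d1, d2⟩ | ⟨d1, d2⟩
      · left
        have e1 : (r-2) - u.1.val + (u.1.val - (r-2)) = r := d1
        have e2 : 1 - u.2.val + (u.2.val - 1) = r+1 := d2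
        exact pair_ext (show u.1.val = 2*r-2 by omega) (show u.2.val = r+2 by omega)
      · right
        have e1 : (r-2) - u.1.val + (u.1.val - (r-2)) = r+1 := d1
        have e2 : 1 - u.2.val + (u.2.val - 1) = r := d2
        exact pair_ext (show u.1.val = 2*r-1 by omega) (show u.2.val = r+1 by omega)
    have hA2 : ∀ u, (leaperGraph r (r+1) m n).Adj cA2 u → u = cW ∨ u = cX2 := by
      intro u hadj
      have hu1 := u.1.isLt
      have hu2 := u.2.isLt
      rcases adj_coords hadj with ⟨d1, d2⟩ | ⟨d1, d2⟩
      · left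
        have e1 : (r-1) - u.1.val + (u.1.val - (r-1)) = r := d1
        have e2 : 0 - u.2.val + (u.2.val - 0) = r+1 := d2
        exact pair_ext (show u.1.val = 2*r-1 by omega) (show u.2.val = r+1 by omega)
      · right
        have e1 : (r-1) - u.1.val + (u.1.val - (r-1)) = r+1 := d1
        have e2 : 0 - u.2.val + (u.2.val - 0) = r := d2
        exact pair_ext (show u.1.val = 2*r by omega) (show u.2.val = r by omega)
    have hC1 : ∀ u, (leaperGraph r (r+1) m n).Adj cC1 u → u = cY1 ∨ u = cP := by
      intro u hadj
      have hu1 := u.1.isLt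
      have hu2 := u.2.isLt
      rcases adj_coords hadj with ⟨d1, d2⟩ | ⟨d1, d2⟩
      · left
        have e1 : (r-1) - u.1.val + (u.1.val - (r-1)) = r := d1
        have e2 : 2 - u.2.val + (u.2.val - 2) = r+1 := d2
        exact pair_ext (show u.1.val = 2*r-1 by omega) (show u.2.val = r+3 by omega)
      · right
        have e1 : (r-1) - u.1.val + (u.1.val - (r-1)) = r+1 := d1
        have e2 : 2 - u.2.val + (u.2.val - 2) = r := d2
        exact pair_ext (show u.1.val = 2*r by omega) (show u.2.val = r+2 by omega)
    have hC2 : ∀ u, (leaperGraph r (r+1) m n).Adj cC2 u → u = cY2 ∨ u = cP := by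
      intro u hadj
      have hu1 := u.1.isLt
      have hu2 := u.2.isLt
      rcases adj_coords hadj with ⟨d1, d2⟩ | ⟨d1, d2⟩
      · left
        have e1 : (3*r+1) - u.1.val + (u.1.val - (3*r+1)) = r := d1
        have e2 : 2 - u.2.val + (u.2.val - 2) = r+1 := d2
        exact pair_ext (show u.1.val = 2*r+1 by omega) (show u.2.val = r+3 by omega)
      · right
        have e1 : (3*r+1) - u.1.val + (u.1.val - (3*r+1)) = r+1 := d1
        have e2 : 2 - u.2.val + (u.2.val - 2) = r := d2
        exact pair_ext (show u.1.val = 2*r by omega) (show u.2.val = r+2 by omega)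
    have hD : ∀ u, (leaperGraph r (r+1) m n).Adj cD u → u = cQ ∨ u = cP ∨ u = cW := by
      intro u hadj
      have hu1 := u.1.isLt
      have hu2 := u.2.isLt
      rcases adj_coords hadj with ⟨d1, d2⟩ | ⟨d1, d2⟩
      · have e1 : (3*r) - u.1.val + (u.1.val - (3*r)) = r := d1
        have e2 : 1 - u.2.val + (u.2.val - 1) = r+1 := d2
        have : u.1.val = 4*r ∨ u.1.val = 2*r := by omega
        rcases this with h' | h'
        · exact Or.inl (pair_ext (show u.1.val = 4*r from h') (show u.2.val = r+2 by omega))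
        · exact Or.inr (Or.inl (pair_ext (show u.1.val = 2*r from h') (show u.2.val = r+2 by omega)))
      · have e1 : (3*r) - u.1.val + (u.1.val - (3*r)) = r+1 := d1
        have e2 : 1 - u.2.val + (u.2.val - 1) = r := d2
        exact Or.inr (Or.inr (pair_ext (show u.1.val = 2*r-1 by omega) (show u.2.val = r+1 by omega)))
    -- forced edges
    have hUA1W : CycU E N cW cA1 :=
      CycOk.cycU_symm (hEok.forced2 hA1 (pair_ne_fst (show 2*r-2 ≠ 2*r-1 by omega))).2
    have hUA2W : CycU E N cW cA2 :=
      CycOk.cycU_symm (hEok.forced2 hA2 (pair_ne_snd (show r+1 ≠ r by omega))).1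
    have hnWD : ¬ CycU E N cW cD :=
      hEok.not_third hUA1W hUA2W
        (pair_ne_snd (show (1:ℕ) ≠ 0 by omega))
        (pair_ne_fst (show 3*r ≠ r-2 by omega))
        (pair_ne_snd (show (1:ℕ) ≠ 0 by omega))
    have hnDW : ¬ CycU E N cD cW := fun hu => hnWD (CycOk.cycU_symm hu)
    have hUDP : CycU E N cP cD :=
      CycOk.cycU_symm (hEok.forced3 hD hnDW (pair_ne_fst (show 4*r ≠ 2*r by omega))).2
    have hUPC1 : CycU E N cP cC1 :=
      CycOk.cycU_symm (hEok.forced2 hC1 (pair_ne_fst (show 2*r-1 ≠ 2*r by omega))).2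
    have hUPC2 : CycU E N cP cC2 :=
      CycOk.cycU_symm (hEok.forced2 hC2 (pair_ne_fst (show 2*r+1 ≠ 2*r by omega))).2
    exact hEok.not_third hUPC1 hUPC2
      (pair_ne_fst (show r-1 ≠ 3*r+1 by omega))
      (pair_ne_snd (show (1:ℕ) ≠ 2 by omega))
      (pair_ne_snd (show (1:ℕ) ≠ 2 by omega)) hUDP
end

section
/- Every vertex (x,y) with 0 ≤ x < r and 0 ≤ y < r in the {r,r+1}-leaper graph on an m×n board (with m ≥ 2r+1, n ≥ 2r+2) has exactly two neighbors, namely (x+r, y+r+1) and (x+r+1, y+r); hence any Hamiltonian circuit must contain both of these edges. -/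
theorem SimpleGraph.Walk.IsCycle.mem_edges_of_neighborSet_eq_pair {V : Type*}
    {G : SimpleGraph V} {u v a b : V} {p : G.Walk u u} (hp : p.IsCycle) (hv : v ∈ p.support)
    (hN : G.neighborSet v = {a, b}) : s(v, a) ∈ p.edges ∧ s(v, b) ∈ p.edges := by
  have hpair : ({a, b} : Set V).ncard ≤ 2 := by simpa using Set.ncard_insert_le a {b}
  have hcycle : p.toSubgraph.neighborSet v = {a, b} :=
    Set.eq_of_subset_of_ncard_le (hN ▸ p.toSubgraph.neighborSet_subset v)
      (hpair.trans (hp.ncard_neighborSet_toSubgraph_eq_two hv).ge)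
  have hmem {c : V} (hc : c ∈ p.toSubgraph.neighborSet v) : s(v, c) ∈ p.edges :=
    p.mem_edges_toSubgraph.mp (Subgraph.mem_edgeSet.mpr hc)
  exact ⟨hmem (by simp [hcycle]), hmem (by simp [hcycle])⟩

theorem leaperGraph_neighborSet_of_lt {r s m n x y : ℕ} (hrs : r ≤ s) (hx : x < r) (hy : y < r)
    (hxm : x + s < m) (hyn : y + s < n) :
    (leaperGraph r s m n).neighborSet (⟨x, by omega⟩, ⟨y, by omega⟩) =
      {(⟨x + r, by omega⟩, ⟨y + s, hyn⟩), (⟨x + s, hxm⟩, ⟨y + r, by omega⟩)} := by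
  ext ⟨⟨q₁, hq₁⟩, ⟨q₂, hq₂⟩⟩
  simp only [SimpleGraph.mem_neighborSet, leaperGraph, SimpleGraph.fromRel_adj,
    Set.mem_insert_iff, Set.mem_singleton_iff, Prod.mk.injEq, Fin.mk.injEq, ne_eq, Nat.dist]
  omega

/-- Every vertex `(x,y)` with `x, y < r` in the `{r,r+1}`-leaper graph on an
`m × n` board (`m ≥ 2r+1`, `n ≥ 2r+2`) has exactly the two neighbors
`(x+r, y+r+1)` and `(x+r+1, y+r)`; hence any Hamiltonian circuit contains
both corresponding edges. -/
theorem leaper_corner_forced_edges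
    (r m n x y : ℕ) (hx : x < r) (hy : y < r)
    (hm : 2 * r + 1 ≤ m) (hn : 2 * r + 2 ≤ n) :
    let G := leaperGraph r (r + 1) m n
    let v : Fin m × Fin n := (⟨x, by omega⟩, ⟨y, by omega⟩)
    let a : Fin m × Fin n := (⟨x + r, by omega⟩, ⟨y + r + 1, by omega⟩)
    let b : Fin m × Fin n := (⟨x + r + 1, by omega⟩, ⟨y + r, by omega⟩)
    G.neighborSet v = {a, b} ∧
      ∀ (u : Fin m × Fin n) (w : G.Walk u u), w.IsHamiltonianCycle →
        s(v, a) ∈ w.edges ∧ s(v, b) ∈ w.edges := by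
  intro G v a b
  have hN : G.neighborSet v = {a, b} :=
    leaperGraph_neighborSet_of_lt r.le_succ hx hy (by omega) (by omega)
  exact ⟨hN, fun _ w hw => hw.isCycle.mem_edges_of_neighborSet_eq_pair (hw.mem_support v) hN⟩
end

section
/- For 2 ≤ r < s, the {r,s}-leaper graph on a (2s)×n board (any n) has no Hamiltonian circuit. -/
/-!
Mark the columns `x < s` with `⌊x / r⌋` even and the columns `x ≥ s` with `⌊(x - s) / r⌋`
odd. No two marked columns are `r` or `s` apart, so the marked cells form an independent set
containing half of the board, and a Hamiltonian circuit must alternate between marked and unmarked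
cells. Every move also changes `x + y` by `r + s` modulo 2, so `x + y + (r + s) · [marked]` is
constant modulo 2 along the circuit; but it differs at the cells `(0, 0)` and `(0, 1)`.
-/

open Finset

namespace SimpleGraph.Walk

variable {V : Type*} {G : SimpleGraph V}

lemma apply_eq_of_forall_mem_darts {α : Type*} (f : V → α) {u v : V} (p : G.Walk u v)
    (h : ∀ d ∈ p.darts, f d.fst = f d.snd) : f u = f v := by
  induction p with
  | nil => rfl
  | cons hadj p ih =>
    simp only [darts_cons, List.mem_cons, forall_eq_or_imp] at h
    exact h.1.trans (ih h.2)

variable [DecidableEq V] {v : V} {w : G.Walk v v}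

lemma IsHamiltonianCycle.apply_eq_of_forall_mem_darts {α : Type*} (hw : w.IsHamiltonianCycle)
    (f : V → α) (h : ∀ d ∈ w.darts, f d.fst = f d.snd) (x y : V) : f x = f y := by
  have key : ∀ z, f z = f v := fun z =>
    ((w.takeUntil z (hw.mem_support z)).apply_eq_of_forall_mem_darts f
      fun d hd => h d (w.darts_takeUntil_subset_darts _ hd)).symm
  rw [key x, key y]

variable [Fintype V]

lemma IsHamiltonianCycle.sum_map_snd_darts {M : Type*} [AddCommMonoid M]
    (hw : w.IsHamiltonianCycle) (f : V → M) : (w.darts.map (f ·.snd)).sum = ∑ x, f x := by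
  have htail : w.support.tail.toFinset = univ := by
    rw [← support_tail_of_not_nil w hw.isCycle.not_nil]
    exact hw.isHamiltonian_tail.toFinset_support
  rw [← Function.comp_def f, ← List.map_map, map_snd_darts, ← htail,
    List.sum_toFinset f hw.isCycle.support_nodup]

lemma IsHamiltonianCycle.sum_map_fst_darts {M : Type*} [AddCommMonoid M]
    (hw : w.IsHamiltonianCycle) (f : V → M) : (w.darts.map (f ·.fst)).sum = ∑ x, f x := by
  rw [← Function.comp_def f, ← List.map_map, map_fst_darts,
    ← (w.tail_support_perm_dropLast_support.map f).sum_eq, ← map_snd_darts, List.map_map]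
  exact hw.sum_map_snd_darts f

lemma IsHamiltonianCycle.mem_iff_notMem_of_isIndepSet (hw : w.IsHamiltonianCycle)
    {A : Finset V} (hA : G.IsIndepSet A) (hcard : 2 * #A = Fintype.card V) :
    ∀ d ∈ w.darts, (d.fst ∈ A ↔ d.snd ∉ A) := by
  let ind : V → ℕ := fun x => if x ∈ A then 1 else 0
  have hle : ∀ d ∈ w.darts, ind d.fst + ind d.snd ≤ 1 := by
    intro d _
    have : ¬ (d.fst ∈ A ∧ d.snd ∈ A) := fun h => hA h.1 h.2 d.adj.ne d.adj
    grind
  have hsum : (w.darts.map fun d => ind d.fst + ind d.snd).sum = w.darts.length := by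
    rw [List.sum_map_add, hw.sum_map_fst_darts, hw.sum_map_snd_darts, length_darts,
      hw.length_eq, ← hcard, sum_boole, filter_mem_eq_inter, univ_inter, Nat.cast_id, two_mul]
  intro d hd
  by_contra hne
  have hlt := List.sum_lt_sum _ (fun _ => 1) hle ⟨d, hd, by grind⟩
  simp [hsum] at hlt

end SimpleGraph.Walk

def IsMarkedColumn (r s x : ℕ) : Prop :=
  if x < s then x / r % 2 = 0 else (x - s) / r % 2 = 1

instance (r s x : ℕ) : Decidable (IsMarkedColumn r s x) := by
  unfold IsMarkedColumn; infer_instance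

lemma isMarkedColumn_add_iff {r s x : ℕ} (hx : x < s) :
    IsMarkedColumn r s (x + s) ↔ ¬ IsMarkedColumn r s x := by
  simp only [IsMarkedColumn, if_pos hx, if_neg (Nat.not_lt.2 (Nat.le_add_left s x)),
    Nat.add_sub_cancel]
  omega

lemma not_isMarkedColumn_add {r s x : ℕ} (hr : 0 < r) (hmx : IsMarkedColumn r s x) :
    ¬ IsMarkedColumn r s (x + r) := by
  unfold IsMarkedColumn at *
  by_cases h1 : x + r < s
  · rw [if_pos (by omega : x < s)] at hmx
    rw [if_pos h1, Nat.add_div_right x hr]; omega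
  by_cases h2 : x < s
  · rw [if_neg h1, Nat.div_eq_of_lt (by omega : x + r - s < r)]; omega
  · rw [if_neg h2] at hmx
    rw [if_neg h1, show x + r - s = x - s + r by omega, Nat.add_div_right _ hr]; omega

lemma not_isMarkedColumn_of_dist {r s x y : ℕ} (hr : 0 < r) (hrs : r < s) (hx : x < 2 * s)
    (hy : y < 2 * s) (hd : Nat.dist x y = r ∨ Nat.dist x y = s) (hmx : IsMarkedColumn r s x) :
    ¬ IsMarkedColumn r s y := by
  have key : ∀ a b, b < 2 * s → (b = a + r ∨ b = a + s) → IsMarkedColumn r s a →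
      ¬ IsMarkedColumn r s b := by
    rintro a b hb (rfl | rfl) ha
    · exact not_isMarkedColumn_add hr ha
    · exact fun hb => (isMarkedColumn_add_iff (by omega)).1 hb ha
  unfold Nat.dist at hd
  rcases le_total x y with h | h
  · exact key x y hy (by omega) hmx
  · exact fun hmy => key y x hx (by omega) hmy hmx

lemma card_filter_isMarkedColumn (r s : ℕ) :
    #{x ∈ range (2 * s) | IsMarkedColumn r s x} = s := by
  rw [card_filter, two_mul, sum_range_add, ← sum_add_distrib]
  conv_rhs => rw [← card_range s, card_eq_sum_ones]
  refine sum_congr rfl fun x hx => ?_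
  rw [add_comm s x]
  by_cases h : IsMarkedColumn r s x <;> simp [h, isMarkedColumn_add_iff (mem_range.1 hx)]

section leaperGraph

variable {r s m n : ℕ} {p q : Fin m × Fin n}

lemma leaperGraph_adj_dist (h : (leaperGraph r s m n).Adj p q) :
    (Nat.dist p.1 q.1 = r ∧ Nat.dist p.2 q.2 = s) ∨
      (Nat.dist p.1 q.1 = s ∧ Nat.dist p.2 q.2 = r) := by
  rw [leaperGraph, SimpleGraph.fromRel_adj] at h
  simp only [Nat.dist_comm (q.1 : ℕ), Nat.dist_comm (q.2 : ℕ), or_self] at h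
  exact h.2

lemma lt_of_leaperGraph_adj (hrs : r ≤ s) (h : (leaperGraph r s m n).Adj p q) : r < n := by
  have := p.2.isLt; have := q.2.isLt
  rcases leaperGraph_adj_dist h with h | h <;> unfold Nat.dist at h <;> omega

lemma leaperGraph_adj_parity (h : (leaperGraph r s m n).Adj p q) :
    (((p.1 + p.2 : ℕ) : ZMod 2) + ((q.1 + q.2 : ℕ) : ZMod 2)) = ((r + s : ℕ) : ZMod 2) := by
  rw [← Nat.cast_add, ZMod.natCast_eq_natCast_iff']
  rcases leaperGraph_adj_dist h with h | h <;> unfold Nat.dist at h <;> omega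

end leaperGraph

def markedCells (r s n : ℕ) : Finset (Fin (2 * s) × Fin n) :=
  {p | IsMarkedColumn r s p.1}

lemma two_mul_card_markedCells (r s n : ℕ) :
    2 * #(markedCells r s n) = Fintype.card (Fin (2 * s) × Fin n) := by
  have hcols : #{x : Fin (2 * s) | IsMarkedColumn r s x} = s := by
    rw [card_filter, Fin.sum_univ_eq_sum_range (fun x => if IsMarkedColumn r s x then 1 else 0),
      ← card_filter, card_filter_isMarkedColumn]
  rw [markedCells, ← univ_product_univ,
    filter_product_left fun x : Fin (2 * s) => IsMarkedColumn r s x, card_product, hcols,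
    Fintype.card_prod, Fintype.card_fin, Fintype.card_fin, card_univ, Fintype.card_fin, mul_assoc]

lemma isIndepSet_markedCells {r s n : ℕ} (hr : 0 < r) (hrs : r < s) :
    (leaperGraph r s (2 * s) n).IsIndepSet (markedCells r s n : Set (Fin (2 * s) × Fin n)) := by
  intro p hp q hq _ hadj
  simp only [markedCells, coe_filter, mem_univ, true_and, Set.mem_ofPred_eq] at hp hq
  refine not_isMarkedColumn_of_dist hr hrs p.1.isLt q.1.isLt ?_ hp hq
  rcases leaperGraph_adj_dist hadj with h | h
  exacts [.inl h.1, .inr h.1]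

/-- For `2 ≤ r < s`, the `{r,s}`-leaper graph on a `2s × n` board has no
Hamiltonian circuit. -/
theorem leaper_2s_no_hamCycle (r s : ℕ) (hr : 2 ≤ r) (hrs : r < s) :
    ∀ n : ℕ, ¬ HasHamCycle (leaperGraph r s (2 * s) n) := by
  rintro n ⟨v, w, hw⟩
  have hn : 2 ≤ n := hr.trans (lt_of_leaperGraph_adj hrs.le (w.adj_snd hw.isCycle.not_nil)).le
  have hflip := hw.mem_iff_notMem_of_isIndepSet (isIndepSet_markedCells (by omega) hrs)
    (two_mul_card_markedCells r s n)
  let τ : Fin (2 * s) × Fin n → ZMod 2 := fun p =>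
    ((p.1 + p.2 : ℕ) : ZMod 2) +
      ((r + s : ℕ) : ZMod 2) * if p ∈ markedCells r s n then 1 else 0
  have hτ : ∀ d ∈ w.darts, τ d.fst = τ d.snd := by
    intro d hd
    have hpar := leaperGraph_adj_parity d.adj
    have hmarked := hflip d hd
    grind
  have h01 := hw.apply_eq_of_forall_mem_darts τ hτ (⟨0, by omega⟩, ⟨0, by omega⟩)
    (⟨0, by omega⟩, ⟨1, by omega⟩)
  simp [τ, markedCells] at h01
end
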